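/- Suppose {φ_k}_{k ∈ ℤ} is a sequence of bounded measurable functions on the torus 𝕋 = ℝ/ℤ and B is a constant such that for every finitely supported f : ℤ → ℂ, ‖sup_k |𝓕^{-1}(φ_k · f̂)|‖_{ℓ²(ℤ)} ≤ B ‖f‖_{ℓ²(ℤ)}. Then there is an absolute constant C such that for every finitely supported f : ℤ² → ℂ and every nonzero v ∈ ℤ², ‖sup_k |𝓕^{-1}(β ↦ φ_k(v·β) · f̂(β))|‖_{ℓ²(ℤ²)} ≤ C B ‖f‖_{ℓ²(ℤ²)}. -/
import Mathlib

set_option maxHeartbeats 1000000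


/-- 2D-to-1D transference: if the 1D maximal operator with kernels c k (the inverse
Fourier coefficients of multipliers φ_k) is bounded on ℓ²(ℤ) with constant B, then for
every nonzero v ∈ ℤ² the directional maximal operator along v is bounded on ℓ²(ℤ²)
with constant C·B, for an absolute constant C. -/
theorem transference_2d_to_1d :
    ∃ C : ℝ, 0 < C ∧
      ∀ (c : ℤ → ℤ → ℂ) (B : ℝ), 0 ≤ B →
        (∀ k : ℤ, Summable fun n : ℤ => ‖c k n‖) →
        (∀ f : ℤ → ℂ, f.support.Finite →
          ∑' x : ℤ, (⨆ k : ℤ, ‖∑' n : ℤ, f (x - n) * c k n‖) ^ 2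
            ≤ B ^ 2 * ∑' x : ℤ, ‖f x‖ ^ 2) →
        ∀ (v : ℤ × ℤ), v ≠ 0 → ∀ f : ℤ × ℤ → ℂ, f.support.Finite →
          ∑' x : ℤ × ℤ, (⨆ k : ℤ, ‖∑' n : ℤ, f (x - n • v) * c k n‖) ^ 2
            ≤ (C * B) ^ 2 * ∑' x : ℤ × ℤ, ‖f x‖ ^ 2 := by
  refine ⟨1, one_pos, ?_⟩
  intro c B hB hc h1 v hv f hf
  rw [one_mul]
  have hRHS : 0 ≤ B ^ 2 * ∑' x : ℤ × ℤ, ‖f x‖ ^ 2 :=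
    mul_nonneg (sq_nonneg B) (tsum_nonneg fun x => sq_nonneg _)
  set F : ℤ × ℤ → ℝ :=
    fun x => (⨆ k : ℤ, ‖∑' n : ℤ, f (x - n • v) * c k n‖) ^ 2 with hFdef
  by_cases hsum : Summable F
  swap
  · rw [tsum_eq_zero_of_not_summable hsum]; exact hRHS
  -- quotient by the line ℤ·v
  set N : AddSubgroup (ℤ × ℤ) := AddSubgroup.zmultiples v with hN
  let Q := (ℤ × ℤ) ⧸ N
  let s : Q → ℤ × ℤ := Quotient.out
  have hs : ∀ q : Q, (QuotientAddGroup.mk (s q) : Q) = q := fun q => Quotient.out_eq q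
  have hvsmul : ∀ n m : ℤ, n • v = m • v → n = m := by
    intro n m h
    have : (n - m) • v = 0 := by rw [sub_smul, h, sub_self]
    rcases smul_eq_zero.1 this with h' | h'
    · omega
    · exact absurd h' hv
  -- the bijection Q × ℤ ≃ ℤ × ℤ
  have hinj : Function.Injective (fun p : Q × ℤ => s p.1 + p.2 • v) := by
    rintro ⟨q, n⟩ ⟨q', n'⟩ h
    simp only at h
    have hq : q = q' := by
      have : (QuotientAddGroup.mk (s q + n • v) : Q) = QuotientAddGroup.mk (s q' + n' • v) :=
        by rw [h]
      have h2 : ∀ (r : Q) (m : ℤ), (QuotientAddGroup.mk (s r + m • v) : Q) = r := by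
        intro r m
        rw [QuotientAddGroup.mk_add, hs]
        have : (QuotientAddGroup.mk (m • v) : Q) = 0 := by
          rw [QuotientAddGroup.eq_zero_iff]
          exact AddSubgroup.mem_zmultiples_iff.2 ⟨m, rfl⟩
        rw [this, add_zero]
      rw [h2, h2] at this; exact this
    subst hq
    exact Prod.ext rfl (hvsmul _ _ (add_left_cancel h))
  have hsurj : Function.Surjective (fun p : Q × ℤ => s p.1 + p.2 • v) := by
    intro x
    set q : Q := QuotientAddGroup.mk x with hq
    have : (QuotientAddGroup.mk (x - s q) : Q) = 0 := by
      rw [QuotientAddGroup.mk_sub, hs, ← hq, sub_self]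
    rw [QuotientAddGroup.eq_zero_iff] at this
    rcases AddSubgroup.mem_zmultiples_iff.1 this with ⟨n, hn⟩
    exact ⟨⟨q, n⟩, by simp only [hn, add_sub_cancel]⟩
  let e : Q × ℤ ≃ ℤ × ℤ := Equiv.ofBijective _ ⟨hinj, hsurj⟩
  have he : ∀ p : Q × ℤ, e p = s p.1 + p.2 • v := fun p => rfl
  -- restriction of f to a coset
  set g : Q → ℤ → ℂ := fun q n => f (s q + n • v) with hg
  have hgsupp : ∀ q, (g q).support.Finite := by
    intro q
    have : (g q).support ⊆ (fun n : ℤ => s q + n • v) ⁻¹' f.support := by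
      intro n hn; exact hn
    refine Set.Finite.subset (Set.Finite.preimage ?_ hf) this
    intro a _ b _ hab
    have : a • v = b • v := by
      simpa using add_left_cancel hab
    exact hvsmul _ _ this
  -- the pointwise identity
  have key : ∀ (q : Q) (n : ℤ),
      F (e (q, n)) = (⨆ k : ℤ, ‖∑' m : ℤ, g q (n - m) * c k m‖) ^ 2 := by
    intro q n
    have harg : ∀ m : ℤ, s q + n • v - m • v = s q + (n - m) • v := by
      intro m; rw [sub_smul, ← add_sub_assoc]
    simp only [hFdef, he]
    congr 1
    refine iSup_congr fun k => ?_
    congr 1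
    exact tsum_congr fun m => by rw [harg m]
  have hFnn : ∀ p : Q × ℤ, 0 ≤ F (e p) := fun p => sq_nonneg _
  have hsum' : Summable fun p : Q × ℤ => F (e p) := (Equiv.summable_iff e).2 hsum
  have hLHS : ∑' x : ℤ × ℤ, F x = ∑' (q : Q), ∑' (n : ℤ), F (e (q, n)) := by
    rw [← e.tsum_eq F, Summable.tsum_prod hsum']
  -- 1D bound on each coset
  have hcoset : ∀ q : Q, ∑' n : ℤ, F (e (q, n)) ≤ B ^ 2 * ∑' n : ℤ, ‖g q n‖ ^ 2 := by
    intro q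
    calc ∑' n : ℤ, F (e (q, n))
        = ∑' n : ℤ, (⨆ k : ℤ, ‖∑' m : ℤ, g q (n - m) * c k m‖) ^ 2 :=
          tsum_congr fun n => key q n
      _ ≤ B ^ 2 * ∑' n : ℤ, ‖g q n‖ ^ 2 := h1 (g q) (hgsupp q)
  -- summability of both sides over Q
  have houter : Summable fun q : Q => ∑' n : ℤ, F (e (q, n)) :=
    ((summable_prod_of_nonneg hFnn).1 hsum').2
  -- the RHS over Q is finitely supported
  have hfin : Summable fun q : Q => B ^ 2 * ∑' n : ℤ, ‖g q n‖ ^ 2 := by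
    have hsub : (Function.support fun q : Q => B ^ 2 * ∑' n : ℤ, ‖g q n‖ ^ 2) ⊆
        (fun x : ℤ × ℤ => (QuotientAddGroup.mk x : Q)) '' f.support := by
      intro q hq
      have : ∃ n : ℤ, g q n ≠ 0 := by
        by_contra h
        push_neg at h
        apply hq
        simp only [Function.mem_support, ne_eq, not_not] at *
        have : ∀ n : ℤ, ‖g q n‖ ^ 2 = 0 := fun n => by rw [h n]; simp
        rw [tsum_congr this, tsum_zero, mul_zero]
      rcases this with ⟨n, hn⟩
      refine ⟨s q + n • v, hn, ?_⟩
      show (QuotientAddGroup.mk (s q + n • v) : Q) = q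
      rw [QuotientAddGroup.mk_add, hs]
      have : (QuotientAddGroup.mk (n • v) : Q) = 0 := by
        rw [QuotientAddGroup.eq_zero_iff]
        exact AddSubgroup.mem_zmultiples_iff.2 ⟨n, rfl⟩
      rw [this, add_zero]
    have : (Function.support fun q : Q => B ^ 2 * ∑' n : ℤ, ‖g q n‖ ^ 2).Finite :=
      Set.Finite.subset (Set.Finite.image _ hf) hsub
    exact summable_of_finite_support this
  have hf2 : Summable fun x : ℤ × ℤ => ‖f x‖ ^ 2 := by
    apply summable_of_finite_support
    refine Set.Finite.subset hf ?_
    intro x hx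
    simp only [Function.mem_support, ne_eq] at hx ⊢
    intro h; apply hx; rw [h]; simp
  have hRHSeq : ∑' q : Q, (B ^ 2 * ∑' n : ℤ, ‖g q n‖ ^ 2)
      = B ^ 2 * ∑' x : ℤ × ℤ, ‖f x‖ ^ 2 := by
    rw [tsum_mul_left]
    congr 1
    have h0 : ∑' x : ℤ × ℤ, ‖f x‖ ^ 2 = ∑' p : Q × ℤ, ‖f (e p)‖ ^ 2 :=
      (e.tsum_eq fun x => ‖f x‖ ^ 2).symm
    have hfe : Summable fun p : Q × ℤ => ‖f (e p)‖ ^ 2 := (Equiv.summable_iff e).2 hf2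
    rw [h0, Summable.tsum_prod hfe]
    exact tsum_congr fun q => tsum_congr fun n => rfl
  calc ∑' x : ℤ × ℤ, F x = ∑' (q : Q), ∑' (n : ℤ), F (e (q, n)) := hLHS
    _ ≤ ∑' q : Q, (B ^ 2 * ∑' n : ℤ, ‖g q n‖ ^ 2) := Summable.tsum_le_tsum hcoset houter hfin
    _ = B ^ 2 * ∑' x : ℤ × ℤ, ‖f x‖ ^ 2 := hRHSeq
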